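/- Let X̃_1,…,X̃_n be random variables with |X̃_t| ≤ τ almost surely, let ξ_1,…,ξ_n be i.i.d. centred Laplace random variables with scale parameter 2τ/α, set Z_t = X̃_t + ξ_t, and let I_n^Z(ω) = (1/(2πn))|Σ_{t=1}^n (Z_t − Z̄_n)e^{−itω}|² be the periodogram of Z_1,…,Z_n. Then E[ ‖I_n^Z‖_∞⁴ ] ≤ (2^{11} n⁴ τ⁸)/π⁴ + 2^{19} τ⁸ (n+7)(n+6)···(n+1)n/(π⁴ n⁴ α⁸); in particular E‖I_n^Z‖_∞⁴ ≤ C n⁴ τ⁸/(1 ∧ α⁸) for a numerical constant C. -/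

import Mathlib

/-!
Pointwise, `|e^{-itω}| = 1` and `n |x̄| ≤ ∑ |x_t|` give `‖I_n^x‖_∞ ≤ 2 (∑ |x_t|)² / (π n)`, and
`∑ |Z_t| ≤ n τ + ∑ |ξ_t|`, so `‖I_n^Z‖_∞⁴ ≤ 2⁷ (2 / (π n))⁴ ((n τ)⁸ + (∑ |ξ_t|)⁸)`.
The `|ξ_t|` are independent and exponential with scale `b = 2τ/α`, so `∑ |ξ_t|` has the moments
`b^k n (n + 1) ⋯ (n + k - 1)` of the Gamma distribution with shape `n`; this is an induction on the
number of summands, expanding `(X + Y)^k` binomially and recombining the moments with the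
Chu–Vandermonde identity for rising factorials.
-/

open MeasureTheory ProbabilityTheory Real

noncomputable def sampleMean (n : ℕ) (x : Fin n → ℝ) : ℝ := (∑ t, x t) / n

/-- The centred periodogram `I_n(ω) = (1/(2πn)) |∑_{t=1}^n (x_t - x̄_n) e^{-itω}|²`. -/
noncomputable def periodogram (n : ℕ) (x : Fin n → ℝ) (ω : ℝ) : ℝ :=
  (1 / (2 * π * n)) *
    ‖∑ t : Fin n, ((x t - sampleMean n x : ℝ) : ℂ) *
      Complex.exp (-(Complex.I * ((t.1 + 1 : ℕ) : ℂ) * (ω : ℂ)))‖ ^ 2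

/-- The sup-norm of a function on `[-π, π]`. -/
noncomputable def supNorm (g : ℝ → ℝ) : ℝ := sSup ((fun ω => |g ω|) '' Set.Icc (-π) π)

/-- `ξ` is a centred Laplace random variable with scale parameter `b`. -/
def IsLaplace {Ω : Type*} [MeasurableSpace Ω] (P : Measure Ω) (ξ : Ω → ℝ) (b : ℝ) : Prop :=
  Measure.map ξ P =
    volume.withDensity fun x => ENNReal.ofReal ((1 / (2 * b)) * Real.exp (-|x| / b))

open Polynomial Finset
open scoped Nat ENNReal NNReal

lemma ascPochhammer_eval_add {R : Type*} [CommRing R] (x y : R) (k : ℕ) :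
    (ascPochhammer R k).eval (x + y) = ∑ ij ∈ antidiagonal k,
      (k.choose ij.1 : R) * ((ascPochhammer R ij.1).eval x * (ascPochhammer R ij.2).eval y) := by
  induction k with
  | zero => simp
  | succ k ih =>
    rw [sum_antidiagonal_choose_succ_mul
        (fun i j => (ascPochhammer R i).eval x * (ascPochhammer R j).eval y),
      ascPochhammer_succ_eval, ih, sum_mul, ← sum_add_distrib]
    refine sum_congr rfl fun ij hij => ?_
    rw [HasAntidiagonal.mem_antidiagonal] at hij
    rw [ascPochhammer_succ_eval, ascPochhammer_succ_eval, Nat.choose_symm_of_eq_add hij.symm, ← hij]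
    push_cast
    ring

lemma ascPochhammer_eval_eq_prod_range {R : Type*} [CommSemiring R] (n : ℕ) (r : R) :
    (ascPochhammer R n).eval r = ∏ j ∈ range n, (r + j) := by
  induction n with
  | zero => simp
  | succ n ih => rw [ascPochhammer_succ_eval, ih, prod_range_succ]

lemma integrable_comp_abs_of_integrableOn_Ioi {E : Type*} [NormedAddCommGroup E] {f : ℝ → E}
    (hf : IntegrableOn f (Set.Ioi 0)) : Integrable fun x => f |x| := by
  have hIoi : IntegrableOn (fun x => f |x|) (Set.Ioi 0) :=
    hf.congr_fun (fun x hx => by rw [abs_of_pos hx]) measurableSet_Ioi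
  have hIic : IntegrableOn (fun x => f |x|) (Set.Iic 0) := by
    have hneg : MeasurableEmbedding fun x : ℝ => -x := (Homeomorph.neg ℝ).measurableEmbedding
    rw [← Measure.map_neg_eq_self (volume : Measure ℝ), hneg.integrableOn_map_iff]
    simpa [Function.comp_def] using (integrableOn_Ici_iff_integrableOn_Ioi (μ := volume)).mpr hIoi
  simpa using hIic.union hIoi

lemma integrableOn_pow_mul_exp_neg_div_Ioi {b : ℝ} (hb : 0 < b) (k : ℕ) :
    IntegrableOn (fun t : ℝ => t ^ k * exp (-(t / b))) (Set.Ioi 0) := by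
  refine (integrableOn_rpow_mul_exp_neg_mul_rpow (s := k) (by linarith [k.cast_nonneg (α := ℝ)])
    one_pos (inv_pos.mpr hb)).congr_fun (fun t _ => ?_) measurableSet_Ioi
  simp [div_eq_inv_mul]

lemma integral_pow_mul_exp_neg_div_Ioi {b : ℝ} (hb : 0 < b) (k : ℕ) :
    ∫ t in Set.Ioi (0 : ℝ), t ^ k * exp (-(t / b)) = k ! * b ^ (k + 1) := by
  have h := integral_rpow_mul_exp_neg_mul_Ioi (a := k + 1) (by positivity) (inv_pos.mpr hb)
  rw [add_sub_cancel_right, one_div, inv_inv, Gamma_nat_eq_factorial, ← Nat.cast_succ,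
    rpow_natCast, Nat.succ_eq_add_one, mul_comm] at h
  rw [← h]
  refine setIntegral_congr_fun measurableSet_Ioi fun t _ => ?_
  simp [div_eq_inv_mul]

lemma integrable_laplace_density_mul_abs_pow {b : ℝ} (hb : 0 < b) (k : ℕ) :
    Integrable fun y : ℝ => 1 / (2 * b) * exp (-|y| / b) * |y| ^ k := by
  refine (integrable_comp_abs_of_integrableOn_Ioi
    ((integrableOn_pow_mul_exp_neg_div_Ioi hb k).const_mul (1 / (2 * b)))).congr
    (Filter.Eventually.of_forall fun y => ?_)
  simp only [neg_div]
  ring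

lemma integral_laplace_density_mul_abs_pow {b : ℝ} (hb : 0 < b) (k : ℕ) :
    ∫ y : ℝ, 1 / (2 * b) * exp (-|y| / b) * |y| ^ k = k ! * b ^ k := by
  calc ∫ y : ℝ, 1 / (2 * b) * exp (-|y| / b) * |y| ^ k
      = ∫ y : ℝ, 1 / (2 * b) * (|y| ^ k * exp (-(|y| / b))) := by
        congr 1; ext y; rw [neg_div]; ring
    _ = k ! * b ^ k := by
        rw [integral_comp_abs (f := fun t => 1 / (2 * b) * (t ^ k * exp (-(t / b)))),
          integral_const_mul, integral_pow_mul_exp_neg_div_Ioi hb]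
        field_simp
        ring

lemma sum_abs_sub_sampleMean_le {n : ℕ} (x : Fin n → ℝ) :
    ∑ t, |x t - sampleMean n x| ≤ 2 * ∑ t, |x t| := by
  rcases n.eq_zero_or_pos with rfl | hn
  · simp
  have hmean : n * |sampleMean n x| ≤ ∑ t, |x t| := by
    rw [sampleMean, abs_div, Nat.abs_cast, mul_div_cancel₀ _ (by positivity)]
    exact abs_sum_le_sum_abs _ _
  calc ∑ t, |x t - sampleMean n x| ≤ ∑ t, (|x t| + |sampleMean n x|) :=
        sum_le_sum fun t _ => abs_sub _ _
    _ = ∑ t, |x t| + n * |sampleMean n x| := by simp [sum_add_distrib]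
    _ ≤ 2 * ∑ t, |x t| := by linarith

lemma periodogram_nonneg (n : ℕ) (x : Fin n → ℝ) (ω : ℝ) : 0 ≤ periodogram n x ω := by
  unfold periodogram
  positivity

lemma periodogram_le (n : ℕ) (x : Fin n → ℝ) (ω : ℝ) :
    periodogram n x ω ≤ 2 / (π * n) * (∑ t, |x t|) ^ 2 := by
  have hnorm : ‖∑ t : Fin n, ((x t - sampleMean n x : ℝ) : ℂ) *
      Complex.exp (-(Complex.I * ((t.1 + 1 : ℕ) : ℂ) * (ω : ℂ)))‖ ≤ 2 * ∑ t, |x t| := by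
    refine (norm_sum_le _ _).trans (le_trans (le_of_eq (sum_congr rfl fun t _ => ?_))
      (sum_abs_sub_sampleMean_le x))
    rw [norm_mul, Complex.norm_real, Real.norm_eq_abs, Complex.norm_exp]
    simp [Complex.mul_re]
  calc periodogram n x ω ≤ 1 / (2 * π * n) * (2 * ∑ t, |x t|) ^ 2 := by
        unfold periodogram
        gcongr
    _ = 2 / (π * n) * (∑ t, |x t|) ^ 2 := by ring

lemma supNorm_nonneg (g : ℝ → ℝ) : 0 ≤ supNorm g :=
  Real.sSup_nonneg <| by rintro _ ⟨ω, -, rfl⟩; exact abs_nonneg _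

lemma supNorm_le {g : ℝ → ℝ} {M : ℝ} (hM : 0 ≤ M) (hg : ∀ ω, |g ω| ≤ M) : supNorm g ≤ M :=
  Real.sSup_le (by rintro _ ⟨ω, -, rfl⟩; exact hg ω) hM

lemma supNorm_periodogram_le (n : ℕ) (x : Fin n → ℝ) :
    supNorm (periodogram n x) ≤ 2 / (π * n) * (∑ t, |x t|) ^ 2 :=
  supNorm_le (by positivity) fun ω => by
    rw [abs_of_nonneg (periodogram_nonneg n x ω)]
    exact periodogram_le n x ω

lemma supNorm_periodogram_add_pow_four_le {n : ℕ} {τ : ℝ} (hτ : 0 ≤ τ) {x : Fin n → ℝ}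
    (hx : ∀ t, |x t| ≤ τ) (y : Fin n → ℝ) :
    supNorm (periodogram n fun t => x t + y t) ^ 4 ≤
      (2 / (π * n)) ^ 4 * 2 ^ 7 * ((n * τ) ^ 8 + (∑ t, |y t|) ^ 8) := by
  have hsum : ∑ t, |x t + y t| ≤ n * τ + ∑ t, |y t| := by
    calc ∑ t, |x t + y t| ≤ ∑ t, (τ + |y t|) :=
          sum_le_sum fun t _ => (abs_add_le _ _).trans (by linarith [hx t])
      _ = n * τ + ∑ t, |y t| := by simp [sum_add_distrib]
  calc supNorm (periodogram n fun t => x t + y t) ^ 4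
      ≤ (2 / (π * n) * (∑ t, |x t + y t|) ^ 2) ^ 4 := by
        gcongr
        · exact supNorm_nonneg _
        · exact supNorm_periodogram_le n _
    _ ≤ (2 / (π * n) * (n * τ + ∑ t, |y t|) ^ 2) ^ 4 := by gcongr
    _ = (2 / (π * n)) ^ 4 * (n * τ + ∑ t, |y t|) ^ 8 := by ring
    _ ≤ (2 / (π * n)) ^ 4 * 2 ^ 7 * ((n * τ) ^ 8 + (∑ t, |y t|) ^ 8) := by
        rw [mul_assoc]
        gcongr
        exact add_pow_le (by positivity) (by positivity) 8

lemma prod_range_add_le_pow {x : ℝ} (hx : 1 ≤ x) (m : ℕ) :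
    ∏ k ∈ range m, (x + k) ≤ (m * x) ^ m := by
  calc ∏ k ∈ range m, (x + k) ≤ ∏ _k ∈ range m, (m * x) := by
        refine prod_le_prod (fun k _ => by positivity) fun k hk => ?_
        have hk : (k : ℝ) + 1 ≤ m := by exact_mod_cast mem_range.mp hk
        nlinarith
    _ = (m * x) ^ m := by rw [prod_const, card_range]

lemma fourth_moment_bound_le_div_min {n : ℕ} (hn : 1 ≤ n) (τ : ℝ) {α : ℝ} (hα : 0 < α) :
    2 ^ 11 * n ^ 4 * τ ^ 8 / π ^ 4 + 2 ^ 19 * τ ^ 8 * (∏ k ∈ range 8, ((n : ℝ) + k))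
        / (π ^ 4 * n ^ 4 * α ^ 8) ≤ 2 ^ 44 * n ^ 4 * τ ^ 8 / min 1 (α ^ 8) := by
  set m := min 1 (α ^ 8)
  have hm : 0 < m := lt_min one_pos (by positivity)
  have hπ : 1 ≤ π ^ 4 := one_le_pow₀ (by linarith [pi_gt_three])
  have hn' : (1 : ℝ) ≤ n := by exact_mod_cast hn
  have hfirst : 2 ^ 11 * n ^ 4 * τ ^ 8 / π ^ 4 ≤ 2 ^ 11 * n ^ 4 * τ ^ 8 / m :=
    div_le_div_of_nonneg_left (by positivity) hm ((min_le_left _ _).trans hπ)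
  have hsecond : 2 ^ 19 * τ ^ 8 * (∏ k ∈ range 8, ((n : ℝ) + k)) / (π ^ 4 * n ^ 4 * α ^ 8)
      ≤ 2 ^ 43 * n ^ 4 * τ ^ 8 / m := by
    rw [div_le_div_iff₀ (by positivity) hm]
    have hmα : m ≤ π ^ 4 * α ^ 8 :=
      (min_le_right _ _).trans (le_mul_of_one_le_left (by positivity) hπ)
    calc 2 ^ 19 * τ ^ 8 * (∏ k ∈ range 8, ((n : ℝ) + k)) * m
        ≤ 2 ^ 19 * τ ^ 8 * (8 * n) ^ 8 * (π ^ 4 * α ^ 8) := by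
          gcongr
          exact_mod_cast prod_range_add_le_pow hn' 8
      _ = 2 ^ 43 * n ^ 4 * τ ^ 8 * (π ^ 4 * n ^ 4 * α ^ 8) := by ring
  calc _ ≤ 2 ^ 11 * n ^ 4 * τ ^ 8 / m + 2 ^ 43 * n ^ 4 * τ ^ 8 / m := add_le_add hfirst hsecond
    _ ≤ 2 ^ 44 * n ^ 4 * τ ^ 8 / m := by
        rw [← add_div]
        gcongr
        nlinarith [pow_nonneg (sq_nonneg τ) 4, pow_pos (by positivity : (0 : ℝ) < n) 4]

section Moments

variable {Ω : Type*} [MeasurableSpace Ω] {μ : Measure Ω}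

/-- The moments of the Gamma distribution with shape `a` and scale `b`. -/
def HasGammaMoments (μ : Measure Ω) (X : Ω → ℝ) (a b : ℝ) : Prop :=
  ∀ k : ℕ, Integrable (fun ω => X ω ^ k) μ ∧
    ∫ ω, X ω ^ k ∂μ = b ^ k * (ascPochhammer ℝ k).eval a

lemma hasGammaMoments_zero [IsProbabilityMeasure μ] (b : ℝ) : HasGammaMoments μ 0 0 b := by
  intro k
  cases k <;> simp

lemma HasGammaMoments.add {X Y : Ω → ℝ} {a c b : ℝ} (hX : HasGammaMoments μ X a b)
    (hY : HasGammaMoments μ Y c b) (hXY : IndepFun X Y μ) :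
    HasGammaMoments μ (X + Y) (a + c) b := by
  intro k
  have hindep (ij : ℕ × ℕ) : IndepFun (fun ω => X ω ^ ij.1) (fun ω => Y ω ^ ij.2) μ :=
    hXY.comp (measurable_id.pow_const ij.1 : Measurable fun x : ℝ => x ^ ij.1)
      (measurable_id.pow_const ij.2 : Measurable fun y : ℝ => y ^ ij.2)
  have hint (ij : ℕ × ℕ) : Integrable (fun ω => X ω ^ ij.1 * Y ω ^ ij.2) μ :=
    (hindep ij).integrable_mul (hX _).1 (hY _).1
  have hexpand : (fun ω => (X + Y) ω ^ k) =
      fun ω => ∑ ij ∈ antidiagonal k, (k.choose ij.1 : ℝ) * (X ω ^ ij.1 * Y ω ^ ij.2) := by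
    ext ω
    simp [(Commute.all (X ω) (Y ω)).add_pow', nsmul_eq_mul]
  refine ⟨hexpand ▸ integrable_finsetSum _ fun ij _ => (hint ij).const_mul _, ?_⟩
  rw [hexpand, integral_finsetSum _ fun ij _ => (hint ij).const_mul _, ascPochhammer_eval_add,
    mul_sum]
  refine sum_congr rfl fun ij hij => ?_
  rw [integral_const_mul, (hindep ij).integral_fun_mul_eq_mul_integral
      (hX _).1.aestronglyMeasurable (hY _).1.aestronglyMeasurable, (hX _).2, (hY _).2,
    ← (HasAntidiagonal.mem_antidiagonal.mp hij), pow_add]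
  ring

lemma iIndepFun.hasGammaMoments_sum [IsProbabilityMeasure μ] {ι : Type*} {X : ι → Ω → ℝ}
    {a b : ℝ} (hm : ∀ i, Measurable (X i)) (hind : iIndepFun X μ)
    (h : ∀ i, HasGammaMoments μ (X i) a b) (s : Finset ι) :
    HasGammaMoments μ (∑ i ∈ s, X i) (#s * a) b := by
  classical
  induction s using Finset.induction_on with
  | empty => simpa using hasGammaMoments_zero b
  | insert i s hi ih =>
    rw [sum_insert hi, card_insert_of_notMem hi, Nat.cast_succ, add_mul, one_mul, add_comm _ a]
    exact (h i).add ih (hind.indepFun_finsetSum_of_notMem hm hi).symm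

lemma IsLaplace.hasGammaMoments_abs {P : Measure Ω} {ξ : Ω → ℝ} {b : ℝ} (hb : 0 < b)
    (hm : Measurable ξ) (hL : IsLaplace P ξ b) : HasGammaMoments P (fun ω => |ξ ω|) 1 b := by
  intro k
  have hρ : Measurable fun y : ℝ => (1 / (2 * b) * exp (-|y| / b)).toNNReal :=
    ((measurable_abs.neg.div_const b).exp.const_mul _).real_toNNReal
  have hmap : P.map ξ =
      volume.withDensity fun y => ((1 / (2 * b) * exp (-|y| / b)).toNNReal : ℝ≥0∞) := hL
  have hpow : AEStronglyMeasurable (fun y : ℝ => |y| ^ k) (P.map ξ) :=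
    (measurable_abs.pow_const k).aestronglyMeasurable
  have hsmul (y : ℝ) : (1 / (2 * b) * exp (-|y| / b)).toNNReal • |y| ^ k =
      1 / (2 * b) * exp (-|y| / b) * |y| ^ k := by
    rw [NNReal.smul_def, Real.coe_toNNReal _ (by positivity), smul_eq_mul]
  rw [ascPochhammer_eval_one, mul_comm]
  constructor
  · change Integrable ((fun y : ℝ => |y| ^ k) ∘ ξ) P
    rw [← integrable_map_measure hpow hm.aemeasurable, hmap,
      integrable_withDensity_iff_integrable_smul hρ]
    simpa only [hsmul] using integrable_laplace_density_mul_abs_pow hb k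
  · rw [← integral_map hm.aemeasurable hpow, hmap, integral_withDensity_eq_integral_smul hρ]
    simpa only [hsmul] using integral_laplace_density_mul_abs_pow hb k

lemma integral_supNorm_periodogram_pow_four_le {P : Measure Ω} [IsProbabilityMeasure P] {n : ℕ}
    {τ b : ℝ} (hb : 0 < b) (hτ : 0 ≤ τ) {X ξ : Fin n → Ω → ℝ} (hξm : ∀ t, Measurable (ξ t))
    (hX : ∀ᵐ ω ∂P, ∀ t, |X t ω| ≤ τ) (hind : iIndepFun ξ P) (hL : ∀ t, IsLaplace P (ξ t) b) :
    ∫ ω, supNorm (periodogram n fun t => X t ω + ξ t ω) ^ 4 ∂P ≤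
      (2 / (π * n)) ^ 4 * 2 ^ 7 * ((n * τ) ^ 8 + b ^ 8 * ∏ k ∈ range 8, ((n : ℝ) + k)) := by
  set S : Ω → ℝ := fun ω => ∑ t, |ξ t ω|
  have hS : HasGammaMoments P S n b := by
    have := iIndepFun.hasGammaMoments_sum (fun t => (hξm t).abs)
      (hind.comp (fun _ => abs) fun _ => measurable_abs)
      (fun t => (hL t).hasGammaMoments_abs hb (hξm t)) univ
    simpa [S, Function.comp_def, Finset.sum_fn] using this
  calc ∫ ω, supNorm (periodogram n fun t => X t ω + ξ t ω) ^ 4 ∂P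
      ≤ ∫ ω, (2 / (π * n)) ^ 4 * 2 ^ 7 * ((n * τ) ^ 8 + S ω ^ 8) ∂P :=
        integral_mono_of_nonneg (.of_forall fun ω => pow_nonneg (supNorm_nonneg _) 4)
          (((integrable_const _).add (hS 8).1).const_mul _)
          (hX.mono fun ω hω => supNorm_periodogram_add_pow_four_le hτ hω _)
    _ = _ := by
        rw [integral_const_mul, integral_add (integrable_const _) (hS 8).1, (hS 8).2,
          ascPochhammer_eval_eq_prod_range]
        simp

end Moments

/-- **Fourth moment of the sup-norm of the privatized periodogram.**
If `|X̃_t| ≤ τ` a.s., `ξ_1,…,ξ_n` are i.i.d. centred Laplace with scale `2τ/α` and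
`Z_t = X̃_t + ξ_t`, then `E ‖I_n^Z‖_∞⁴ ≤ 2¹¹n⁴τ⁸/π⁴ + 2¹⁹τ⁸(n+7)⋯(n+1)n/(π⁴n⁴α⁸)`;
in particular `E ‖I_n^Z‖_∞⁴ ≤ C n⁴τ⁸/(1 ∧ α⁸)` for a numerical constant `C`. -/
theorem periodogram_supnorm_fourth_moment :
    ∃ C : ℝ, 0 < C ∧
      ∀ (Ω : Type) [MeasurableSpace Ω] (P : Measure Ω), IsProbabilityMeasure P →
      ∀ (n : ℕ), 1 ≤ n →
      ∀ (τ α : ℝ), 0 < τ → 0 < α →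
      ∀ (Xt ξ : Fin n → Ω → ℝ),
        (∀ t, Measurable (Xt t)) → (∀ t, Measurable (ξ t)) →
        (∀ᵐ x ∂P, ∀ t, |Xt t x| ≤ τ) →
        iIndepFun ξ P →
        (∀ t, IsLaplace P (ξ t) (2 * τ / α)) →
      ∀ (Z : Fin n → Ω → ℝ), (∀ t x, Z t x = Xt t x + ξ t x) →
        (∫ x, (supNorm (periodogram n fun t => Z t x)) ^ 4 ∂P
            ≤ 2 ^ 11 * n ^ 4 * τ ^ 8 / π ^ 4
              + 2 ^ 19 * τ ^ 8 * (∏ k ∈ Finset.range 8, ((n : ℝ) + k))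
                / (π ^ 4 * n ^ 4 * α ^ 8)) ∧
          ∫ x, (supNorm (periodogram n fun t => Z t x)) ^ 4 ∂P
            ≤ C * n ^ 4 * τ ^ 8 / min 1 (α ^ 8) := by
  refine ⟨2 ^ 44, by norm_num, fun Ω _ P _ n hn τ α hτ hα Xt ξ _ hξm hX hind hL Z hZ => ?_⟩
  have hn' : (0 : ℝ) < n := by exact_mod_cast hn
  have hbound := integral_supNorm_periodogram_pow_four_le (by positivity) hτ.le hξm hX hind hL
  simp only [← hZ] at hbound
  have hfirst := hbound.trans_eq (show _ = 2 ^ 11 * n ^ 4 * τ ^ 8 / π ^ 4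
    + 2 ^ 19 * τ ^ 8 * (∏ k ∈ range 8, ((n : ℝ) + k)) / (π ^ 4 * n ^ 4 * α ^ 8) by field_simp)
  exact ⟨hfirst, hfirst.trans (fourth_moment_bound_le_div_min hn τ hα)⟩
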